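/- Let κ be an uncountable cardinal and let No(κ) denote the set of surreal numbers of birthday less than κ. Then the linear order No(κ) is cf(κ)-saturated: for any subsets A and B of No(κ), each of cardinality strictly less than the cofinality cf(κ) of κ, such that a < b for all a ∈ A and b ∈ B, there exists a surreal number x ∈ No(κ) with a < x < b for all a ∈ A and b ∈ B (in particular, taking A or B empty, No(κ) has no subset of cardinality < cf(κ) that is cofinal or coinitial in it). -/

import Mathlib

universe u

/-- Combinatorial pregames (removed from Mathlib; restored with the Dec 2024 Mathlib meaning). -/
inductive SetTheory.PGame : Type (u + 1)
  | mk : ∀ α β : Type u, (α → SetTheory.PGame) → (β → SetTheory.PGame) → SetTheory.PGame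

namespace SetTheory.PGame

/-- The pair `(x ≤ y, x ⧏ y)`, defined by simultaneous recursion as in old Mathlib. -/
noncomputable def leLf : PGame.{u} → PGame.{u} → Prop × Prop :=
  fun x => @PGame.rec (fun _ => PGame.{u} → Prop × Prop)
    (fun xl xr xL xR ihL ihR =>
      fun y => @PGame.rec (fun _ => Prop × Prop)
        (fun yl yr yL yR jhL jhR =>
          ((∀ i, (ihL i (mk yl yr yL yR)).2) ∧ ∀ j, (jhR j).2,
            (∃ i, (jhL i).1) ∨ ∃ j, (ihR j (mk yl yr yL yR)).1)) y) x

instance : LE PGame.{u} := ⟨fun x y => (leLf x y).1⟩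

/-- `x < y` iff `x ≤ y` and `x ⧏ y` (as in old Mathlib). -/
instance : LT PGame.{u} := ⟨fun x y => (leLf x y).1 ∧ (leLf x y).2⟩

/-- Numeric pregames. -/
def Numeric : PGame.{u} → Prop
  | ⟨_, _, L, R⟩ => (∀ i j, L i < R j) ∧ (∀ i, Numeric (L i)) ∧ ∀ j, Numeric (R j)

/-- The birthday of a pregame. -/
noncomputable def birthday : PGame.{u} → Ordinal.{u}
  | ⟨_, _, xL, xR⟩ =>
    max (Ordinal.lsub.{u, u} fun i => birthday (xL i)) (Ordinal.lsub.{u, u} fun i => birthday (xR i))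

end SetTheory.PGame

/-- Surreal numbers: numeric pregames modulo `x ≤ y ∧ y ≤ x`. -/
def Surreal : Type (u + 1) :=
  Quot (fun a b : {p : SetTheory.PGame.{u} // p.Numeric} => a.1 ≤ b.1 ∧ b.1 ≤ a.1)

/-- The surreal number represented by a numeric pregame. -/
def Surreal.mk (p : SetTheory.PGame.{u}) (h : p.Numeric) : Surreal.{u} :=
  Quot.mk _ ⟨p, h⟩

/-- The order of surreals: `x < y` iff some (equivalently, any) representatives satisfy `<`. -/
instance : LT Surreal.{u} :=
  ⟨fun x y => ∃ (p q : SetTheory.PGame.{u}) (hp : p.Numeric) (hq : q.Numeric),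
    Surreal.mk p hp = x ∧ Surreal.mk q hq = y ∧ p < q⟩

open SetTheory Cardinal

/-- The birthday of a surreal number: the least birthday among numeric pregames
representing it. -/
noncomputable def Surreal.birthday (x : Surreal.{u}) : Ordinal.{u} :=
  sInf (SetTheory.PGame.birthday '' {p : SetTheory.PGame.{u} | ∃ h : p.Numeric, Surreal.mk p h = x})


/-! The game `{A | B}` whose options are birthday-minimal representatives of the elements of
`A` (left) and `B` (right) is numeric because `A < B`, and it lies strictly between `A` and `B`.
Its birthday is the supremum of the successors of the birthdays of its options: fewer than
`cf(κ)` ordinals below `κ`, hence it is itself below `κ`. -/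

namespace SetTheory.PGame

abbrev LeftMoves : PGame.{u} → Type u
  | mk l _ _ _ => l

abbrev RightMoves : PGame.{u} → Type u
  | mk _ r _ _ => r

def moveLeft : (x : PGame.{u}) → x.LeftMoves → PGame.{u}
  | mk _ _ L _ => L

def moveRight : (x : PGame.{u}) → x.RightMoves → PGame.{u}
  | mk _ _ _ R => R

def LF (x y : PGame.{u}) : Prop := (leLf x y).2

infix:50 " ⧏ " => LF

theorem mk_le_mk {xl xr yl yr : Type u} {xL : xl → PGame.{u}} {xR : xr → PGame.{u}}
    {yL : yl → PGame.{u}} {yR : yr → PGame.{u}} :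
    mk xl xr xL xR ≤ mk yl yr yL yR ↔
      (∀ i, xL i ⧏ mk yl yr yL yR) ∧ ∀ j, mk xl xr xL xR ⧏ yR j :=
  Iff.rfl

theorem mk_lf_mk {xl xr yl yr : Type u} {xL : xl → PGame.{u}} {xR : xr → PGame.{u}}
    {yL : yl → PGame.{u}} {yR : yr → PGame.{u}} :
    mk xl xr xL xR ⧏ mk yl yr yL yR ↔
      (∃ i, mk xl xr xL xR ≤ yL i) ∨ ∃ j, xR j ≤ mk yl yr yL yR :=
  Iff.rfl

theorem le_iff_forall_lf {x y : PGame.{u}} :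
    x ≤ y ↔ (∀ i, x.moveLeft i ⧏ y) ∧ ∀ j, x ⧏ y.moveRight j := by
  cases x; cases y; exact mk_le_mk

theorem lf_iff_exists_le {x y : PGame.{u}} :
    x ⧏ y ↔ (∃ i, x ≤ y.moveLeft i) ∨ ∃ j, x.moveRight j ≤ y := by
  cases x; cases y; exact mk_lf_mk

protected theorem le_refl (x : PGame.{u}) : x ≤ x := by
  induction x with
  | mk _ _ _ _ ihL ihR =>
    exact le_iff_forall_lf.2 ⟨fun i => lf_iff_exists_le.2 (.inl ⟨i, ihL i⟩),
      fun j => lf_iff_exists_le.2 (.inr ⟨j, ihR j⟩)⟩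

theorem moveLeft_lf (x : PGame.{u}) (i : x.LeftMoves) : x.moveLeft i ⧏ x :=
  lf_iff_exists_le.2 (.inl ⟨i, PGame.le_refl _⟩)

theorem lf_moveRight (x : PGame.{u}) (j : x.RightMoves) : x ⧏ x.moveRight j :=
  lf_iff_exists_le.2 (.inr ⟨j, PGame.le_refl _⟩)

/-- `≤` and `⧏` are each other's negation; they must be proved together by induction. -/
theorem not_le_iff_lf_and_not_le_iff_lf (x y : PGame.{u}) :
    (¬x ≤ y ↔ y ⧏ x) ∧ (¬y ≤ x ↔ x ⧏ y) := by
  induction x generalizing y with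
  | mk xl xr xL xR IHxl IHxr =>
    induction y with
    | mk yl yr yL yR IHyl IHyr =>
      have h1 : ∀ i, xL i ⧏ mk yl yr yL yR ↔ ¬mk yl yr yL yR ≤ xL i := fun i => (IHxl i _).2.symm
      have h2 : ∀ j, mk xl xr xL xR ⧏ yR j ↔ ¬yR j ≤ mk xl xr xL xR := fun j => (IHyr j).2.symm
      have h3 : ∀ i, yL i ⧏ mk xl xr xL xR ↔ ¬mk xl xr xL xR ≤ yL i := fun i => (IHyl i).1.symm
      have h4 : ∀ j, mk yl yr yL yR ⧏ xR j ↔ ¬xR j ≤ mk yl yr yL yR := fun j => (IHxr j _).1.symm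
      rw [mk_le_mk, mk_le_mk, mk_lf_mk, mk_lf_mk]
      simp only [h1, h2, h3, h4, not_and_or, not_forall, not_not, and_self]

protected theorem not_le {x y : PGame.{u}} : ¬x ≤ y ↔ y ⧏ x :=
  (not_le_iff_lf_and_not_le_iff_lf x y).1

theorem le_trans_of_options {x y z : PGame.{u}}
    (h₁ : ∀ i, y ≤ z → z ≤ x.moveLeft i → y ≤ x.moveLeft i)
    (h₂ : ∀ j, z.moveRight j ≤ x → x ≤ y → z.moveRight j ≤ y) (hxy : x ≤ y) (hyz : y ≤ z) :
    x ≤ z := by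
  refine le_iff_forall_lf.2
    ⟨fun i => PGame.not_le.1 fun h => ?_, fun j => PGame.not_le.1 fun h => ?_⟩
  · exact PGame.not_le.2 ((le_iff_forall_lf.1 hxy).1 i) (h₁ i hyz h)
  · exact PGame.not_le.2 ((le_iff_forall_lf.1 hyz).2 j) (h₂ j h hxy)

/-- Transitivity needs all three rotations in the induction hypothesis. -/
theorem le_trans_rotations (x y z : PGame.{u}) :
    (x ≤ y → y ≤ z → x ≤ z) ∧ (y ≤ z → z ≤ x → y ≤ x) ∧ (z ≤ x → x ≤ y → z ≤ y) := by
  induction x generalizing y z with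
  | mk _ _ _ _ IHxl IHxr =>
    induction y generalizing z with
    | mk _ _ _ _ IHyl IHyr =>
      induction z with
      | mk _ _ _ _ IHzl IHzr =>
        exact ⟨le_trans_of_options (fun i => (IHxl i _ _).2.1) (fun j => (IHzr j).2.2),
          le_trans_of_options (fun i => (IHyl i _).2.2) (fun j => (IHxr j _ _).1),
          le_trans_of_options (fun i => (IHzl i).1) (fun j => (IHyr j _).2.1)⟩

protected theorem le_trans {x y z : PGame.{u}} (h₁ : x ≤ y) (h₂ : y ≤ z) : x ≤ z :=
  (le_trans_rotations x y z).1 h₁ h₂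

theorem lf_of_le_of_lf {x y z : PGame.{u}} (h₁ : x ≤ y) (h₂ : y ⧏ z) : x ⧏ z :=
  PGame.not_le.1 fun h => PGame.not_le.2 h₂ (PGame.le_trans h h₁)

theorem lf_of_lf_of_le {x y z : PGame.{u}} (h₁ : x ⧏ y) (h₂ : y ≤ z) : x ⧏ z :=
  PGame.not_le.1 fun h => PGame.not_le.2 h₁ (PGame.le_trans h₂ h)

theorem lt_of_le_of_lt_of_le {w x y z : PGame.{u}} (h₁ : w ≤ x) (h₂ : x < y) (h₃ : y ≤ z) :
    w < z :=
  ⟨PGame.le_trans h₁ (PGame.le_trans h₂.1 h₃), lf_of_le_of_lf h₁ (lf_of_lf_of_le h₂.2 h₃)⟩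

theorem numeric_iff {x : PGame.{u}} : x.Numeric ↔
    (∀ i j, x.moveLeft i < x.moveRight j) ∧ (∀ i, (x.moveLeft i).Numeric) ∧
      ∀ j, (x.moveRight j).Numeric := by
  cases x; rw [Numeric]; rfl

theorem Numeric.moveLeft_le_and_le_moveRight {x : PGame.{u}} (hx : x.Numeric) :
    (∀ i, x.moveLeft i ≤ x) ∧ ∀ j, x ≤ x.moveRight j := by
  induction x with
  | mk _ _ _ _ IHl IHr =>
    obtain ⟨hlt, hl, hr⟩ := numeric_iff.1 hx
    exact ⟨fun i => le_iff_forall_lf.2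
        ⟨fun k => lf_iff_exists_le.2 (.inl ⟨i, (IHl i (hl i)).1 k⟩), fun j => (hlt i j).2⟩,
      fun j => le_iff_forall_lf.2
        ⟨fun i => (hlt i j).2, fun k => lf_iff_exists_le.2 (.inr ⟨j, (IHr j (hr j)).2 k⟩)⟩⟩

theorem Numeric.moveLeft_lt {x : PGame.{u}} (hx : x.Numeric) (i : x.LeftMoves) :
    x.moveLeft i < x :=
  ⟨hx.moveLeft_le_and_le_moveRight.1 i, moveLeft_lf x i⟩

theorem Numeric.lt_moveRight {x : PGame.{u}} (hx : x.Numeric) (j : x.RightMoves) :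
    x < x.moveRight j :=
  ⟨hx.moveLeft_le_and_le_moveRight.2 j, lf_moveRight x j⟩

theorem birthday_lt_of_lt_cof {x : PGame.{u}} {o : Ordinal.{u}}
    (hl : #x.LeftMoves < o.cof) (hr : #x.RightMoves < o.cof)
    (hL : ∀ i, (x.moveLeft i).birthday < o) (hR : ∀ j, (x.moveRight j).birthday < o) :
    x.birthday < o := by
  cases x
  exact max_lt (Ordinal.iSup_add_one_lt_of_lt_cof hl hL) (Ordinal.iSup_add_one_lt_of_lt_cof hr hR)

end SetTheory.PGame

theorem small_of_mk_lt_lift {α : Type (u + 1)} {c : Cardinal.{u}}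
    (h : #α < Cardinal.lift.{u + 1} c) : Small.{u} α :=
  small_iff_lift_mk_lt_univ.2 (by rw [Cardinal.lift_id]; exact h.trans (Cardinal.lift_lt_univ c))

namespace Surreal

open SetTheory.PGame

theorem le_and_le_of_eqvGen {p q : {p : PGame.{u} // p.Numeric}}
    (h : Relation.EqvGen (fun a b : {p : PGame.{u} // p.Numeric} => a.1 ≤ b.1 ∧ b.1 ≤ a.1) p q) :
    p.1 ≤ q.1 ∧ q.1 ≤ p.1 := by
  induction h with
  | rel _ _ h => exact h
  | refl => exact ⟨PGame.le_refl _, PGame.le_refl _⟩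
  | symm _ _ _ ih => exact ih.symm
  | trans _ _ _ _ _ ih₁ ih₂ => exact ⟨PGame.le_trans ih₁.1 ih₂.1, PGame.le_trans ih₂.2 ih₁.2⟩

theorem mk_lt_mk {p q : PGame.{u}} {hp : p.Numeric} {hq : q.Numeric} :
    mk p hp < mk q hq ↔ p < q := by
  refine ⟨fun ⟨p', q', _, _, hpp', hqq', hpq'⟩ => ?_, fun h => ⟨p, q, hp, hq, rfl, rfl, h⟩⟩
  have hp' := le_and_le_of_eqvGen (Quot.eqvGen_exact hpp')
  have hq' := le_and_le_of_eqvGen (Quot.eqvGen_exact hqq')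
  exact lt_of_le_of_lt_of_le hp'.2 hpq' hq'.1

theorem birthday_mk_le (p : PGame.{u}) (hp : p.Numeric) : (mk p hp).birthday ≤ p.birthday :=
  csInf_le' ⟨p, ⟨hp, rfl⟩, rfl⟩

theorem exists_mk_eq_and_birthday_eq (x : Surreal.{u}) :
    ∃ p : PGame.{u}, ∃ hp : p.Numeric, mk p hp = x ∧ p.birthday = x.birthday := by
  obtain ⟨⟨p, hp⟩, rfl⟩ := Quot.exists_rep x
  obtain ⟨q, ⟨hq, hqx⟩, hb⟩ := csInf_mem
    (s := PGame.birthday '' {q : PGame.{u} | ∃ h : q.Numeric, mk q h = mk p hp})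
    ⟨_, p, ⟨hp, rfl⟩, rfl⟩
  exact ⟨q, hq, hqx, hb⟩

noncomputable def minRep (x : Surreal.{u}) : PGame.{u} :=
  (exists_mk_eq_and_birthday_eq x).choose

theorem numeric_minRep (x : Surreal.{u}) : (minRep x).Numeric :=
  (exists_mk_eq_and_birthday_eq x).choose_spec.choose

theorem mk_minRep (x : Surreal.{u}) : mk (minRep x) (numeric_minRep x) = x :=
  (exists_mk_eq_and_birthday_eq x).choose_spec.choose_spec.1

theorem birthday_minRep (x : Surreal.{u}) : (minRep x).birthday = x.birthday :=
  (exists_mk_eq_and_birthday_eq x).choose_spec.choose_spec.2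

section Cut

variable (A B : Set Surreal.{u}) [Small.{u} A] [Small.{u} B]

noncomputable def cut : PGame.{u} :=
  .mk (Shrink A) (Shrink B) (fun i => minRep ((equivShrink A).symm i))
    (fun j => minRep ((equivShrink B).symm j))

theorem moveLeft_cut (i : Shrink A) : (cut A B).moveLeft i = minRep ((equivShrink A).symm i) :=
  rfl

theorem moveRight_cut (j : Shrink B) :
    (cut A B).moveRight j = minRep ((equivShrink B).symm j) :=
  rfl

variable {A B}

theorem numeric_cut (hAB : ∀ a ∈ A, ∀ b ∈ B, a < b) : (cut A B).Numeric := by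
  refine numeric_iff.2
    ⟨fun (i : Shrink A) (j : Shrink B) => ?_, fun _ => numeric_minRep _, fun _ => numeric_minRep _⟩
  rw [moveLeft_cut, moveRight_cut, ← mk_lt_mk (hp := numeric_minRep _) (hq := numeric_minRep _),
    mk_minRep, mk_minRep]
  exact hAB _ (Subtype.prop _) _ (Subtype.prop _)

theorem lt_mk_cut (h : (cut A B).Numeric) {a : Surreal.{u}} (ha : a ∈ A) : a < mk (cut A B) h := by
  have hlt := h.moveLeft_lt (equivShrink A ⟨a, ha⟩)
  rw [moveLeft_cut, Equiv.symm_apply_apply] at hlt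
  simpa only [mk_minRep] using (mk_lt_mk (hp := numeric_minRep a) (hq := h)).2 hlt

theorem mk_cut_lt (h : (cut A B).Numeric) {b : Surreal.{u}} (hb : b ∈ B) : mk (cut A B) h < b := by
  have hlt := h.lt_moveRight (equivShrink B ⟨b, hb⟩)
  rw [moveRight_cut, Equiv.symm_apply_apply] at hlt
  simpa only [mk_minRep] using (mk_lt_mk (hp := h) (hq := numeric_minRep b)).2 hlt

theorem birthday_cut_lt {o : Ordinal.{u}}
    (hA : #A < Cardinal.lift.{u + 1} o.cof) (hB : #B < Cardinal.lift.{u + 1} o.cof)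
    (hAo : ∀ a ∈ A, a.birthday < o) (hBo : ∀ b ∈ B, b.birthday < o) :
    (cut A B).birthday < o := by
  refine birthday_lt_of_lt_cof ?_ ?_ (fun i => ?_) (fun j => ?_)
  · exact Cardinal.lift_lt.{u, u + 1}.1 ((Cardinal.lift_mk_shrink''.{u + 1, u} A).trans_lt hA)
  · exact Cardinal.lift_lt.{u, u + 1}.1 ((Cardinal.lift_mk_shrink''.{u + 1, u} B).trans_lt hB)
  · exact (birthday_minRep _).trans_lt (hAo _ (Subtype.prop _))
  · exact (birthday_minRep _).trans_lt (hBo _ (Subtype.prop _))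

end Cut

end Surreal

theorem surreal_noKappa_cof_saturated_general (κ : Cardinal.{u})
    (A B : Set Surreal.{u})
    (hAκ : ∀ a ∈ A, Surreal.birthday a < κ.ord)
    (hBκ : ∀ b ∈ B, Surreal.birthday b < κ.ord)
    (hcardA : #A < Cardinal.lift.{u + 1} κ.ord.cof)
    (hcardB : #B < Cardinal.lift.{u + 1} κ.ord.cof)
    (hAB : ∀ a ∈ A, ∀ b ∈ B, a < b) :
    ∃ x : Surreal.{u}, Surreal.birthday x < κ.ord ∧
      (∀ a ∈ A, a < x) ∧ ∀ b ∈ B, x < b := by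
  have := small_of_mk_lt_lift hcardA
  have := small_of_mk_lt_lift hcardB
  have hcut := Surreal.numeric_cut hAB
  exact ⟨Surreal.mk _ hcut,
    (Surreal.birthday_mk_le _ hcut).trans_lt (Surreal.birthday_cut_lt hcardA hcardB hAκ hBκ),
    fun a ha => Surreal.lt_mk_cut hcut ha, fun b hb => Surreal.mk_cut_lt hcut hb⟩

/-- **Lemma 1 (order part).** For an uncountable cardinal `κ`, the linearly ordered set
`No(κ)` of surreal numbers of birthday `< κ` is `cf(κ)`-saturated: any two subsets
`A < B` of `No(κ)`, each of cardinality `< cf(κ)`, are separated by an element of `No(κ)`. -/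
theorem surreal_noKappa_cof_saturated (κ : Cardinal.{u}) (hκ : Cardinal.aleph0 < κ)
    (A B : Set Surreal.{u})
    (hAκ : ∀ a ∈ A, Surreal.birthday a < κ.ord)
    (hBκ : ∀ b ∈ B, Surreal.birthday b < κ.ord)
    (hcardA : #A < Cardinal.lift.{u + 1} κ.ord.cof)
    (hcardB : #B < Cardinal.lift.{u + 1} κ.ord.cof)
    (hAB : ∀ a ∈ A, ∀ b ∈ B, a < b) :
    ∃ x : Surreal.{u}, Surreal.birthday x < κ.ord ∧
      (∀ a ∈ A, a < x) ∧ ∀ b ∈ B, x < b :=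
  surreal_noKappa_cof_saturated_general κ A B hAκ hBκ hcardA hcardB hAB
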